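/- Let b, b' ∈ V^{⊗(m−1)} be weight vectors of weights i_b and i_{b'} respectively. Then: (a) ⟨Φ₁(b), Φ₁(b')⟩ = ⟨b, b'⟩; (b) if b is maximal then ⟨Φ₁(b), Φ₂(b')⟩ = 0; (c) if b is maximal and i_b > 0 and i_{b'} > 0 then ⟨Φ₂(b), Φ₂(b')⟩ = v [i_b][i_b + 1] ⟨b, b'⟩. -/

import Mathlib

noncomputable section
attribute [local instance] Classical.propDecidable

/-- Balanced quantum integer `[m]` for a natural number `m`. -/
def qintN {k : Type*} [Field k] (v : k) (m : ℕ) : k :=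
  ∑ t ∈ Finset.range m, v ^ ((m : ℤ) - 1 - 2 * t)

/-- Balanced quantum integer `[m]` for an integer `m`. -/
def qint {k : Type*} [Field k] (v : k) (m : ℤ) : k :=
  if 0 ≤ m then qintN v m.toNat else - qintN v (-m).toNat

/-- Quantum factorial `[m]! = [1][2]⋯[m]`. -/
def qfact {k : Type*} [Field k] (v : k) (m : ℕ) : k :=
  ∏ j ∈ Finset.range m, qintN v (j + 1)

/-- The `n`-th tensor power of `V = k²`, realized as coordinate functions with
respect to the basis `y_i`, `i ∈ {1,-1}ⁿ` (here `true ↔ 1`, `false ↔ -1`). -/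
abbrev Tn (k : Type*) [Field k] (n : ℕ) := (Fin n → Bool) → k

/-- The sign of an index entry: `true ↦ 1`, `false ↦ -1`. -/
def sgn (b : Bool) : ℤ := if b then 1 else -1

/-- The weight `i₁ + ⋯ + i_n` of a basis index. -/
def wt {n : ℕ} (i : Fin n → Bool) : ℤ := ∑ t, sgn (i t)

variable {k : Type*} [Field k]

/-- The operator `E` on `V^{⊗n}`. -/
def Eop (v : k) (n : ℕ) : Tn k n →ₗ[k] Tn k n where
  toFun f := fun i =>
    ∑ j ∈ Finset.univ.filter (fun j => i j = true),
      v ^ (∑ t ∈ Finset.univ.filter (fun t => t < j), sgn (i t)) * f (Function.update i j false)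
  map_add' f g := by
    funext i
    simp [Pi.add_apply, mul_add, Finset.sum_add_distrib]
  map_smul' c f := by
    funext i
    simp only [Pi.smul_apply, smul_eq_mul, RingHom.id_apply]
    rw [Finset.mul_sum]
    exact Finset.sum_congr rfl fun j _ => by ring

/-- The operator `F` on `V^{⊗n}`. -/
def Fop (v : k) (n : ℕ) : Tn k n →ₗ[k] Tn k n where
  toFun f := fun i =>
    ∑ j ∈ Finset.univ.filter (fun j => i j = false),
      v ^ (-(∑ t ∈ Finset.univ.filter (fun t => j < t), sgn (i t))) * f (Function.update i j true)
  map_add' f g := by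
    funext i
    simp [Pi.add_apply, mul_add, Finset.sum_add_distrib]
  map_smul' c f := by
    funext i
    simp only [Pi.smul_apply, smul_eq_mul, RingHom.id_apply]
    rw [Finset.mul_sum]
    exact Finset.sum_congr rfl fun j _ => by ring

/-- The operator `K` on `V^{⊗n}`. -/
def Kop (v : k) (n : ℕ) : Tn k n →ₗ[k] Tn k n where
  toFun f := fun i => v ^ (wt i) * f i
  map_add' f g := by
    funext i
    simp [Pi.add_apply, mul_add]
  map_smul' c f := by
    funext i
    simp only [Pi.smul_apply, smul_eq_mul, RingHom.id_apply]
    ring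

/-- The symmetric bilinear form on `V^{⊗n}` making the `y_i` orthonormal. -/
def form {n : ℕ} (f g : Tn k n) : k := ∑ i, f i * g i

/-- Tensoring on the right with the basis vector `y₁` (if `b = true`) or `y₋₁`
(if `b = false`). -/
def tensY {n : ℕ} (b : Bool) (f : Tn k n) : Tn k (n + 1) :=
  fun i => if i (Fin.last n) = b then f (fun t => i t.castSucc) else 0

/-- `Φ₁(b) = b ⊗ y₁`. -/
def Phi1 {n : ℕ} (f : Tn k n) : Tn k (n + 1) := tensY true f

/-- `Φ₂(b) = [w] b ⊗ y₋₁ − v^w (F b) ⊗ y₁`, where `w` is the weight of `b`. -/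
def Phi2 (v : k) {n : ℕ} (w : ℤ) (f : Tn k n) : Tn k (n + 1) :=
  qint v w • tensY false f - v ^ w • tensY true (Fop v n f)

/-- A `1`-factor: all partial sums are nonnegative. -/
def IsOneFactor {n : ℕ} (α : Fin n → Bool) : Prop :=
  ∀ j : Fin n, 0 ≤ ∑ t ∈ Finset.univ.filter (fun t => t ≤ j), sgn (α t)

/-- The orthogonal maximal vectors `Ω(α)`, defined recursively. -/
def Omega (v : k) : (n : ℕ) → (Fin n → Bool) → Tn k n
  | 0, _ => fun _ => 1
  | n + 1, α =>
      if α (Fin.last n) = true then Phi1 (Omega v n fun t => α t.castSucc)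
      else Phi2 v (wt fun t => α t.castSucc) (Omega v n fun t => α t.castSucc)

/-- Exchanging the entries of an index at two positions. -/
def swapPair {n : ℕ} (a b : Fin n) (i : Fin n → Bool) : Fin n → Bool :=
  fun t => if t = a then i b else if t = b then i a else i t

/-- The Temperley--Lieb operator `ė` acting on tensor positions `a` and `b`
(intended: `b = a + 1`). -/
def eop (v : k) {n : ℕ} (a b : Fin n) : Tn k n →ₗ[k] Tn k n where
  toFun f := fun i =>
    if i a = true ∧ i b = false then -v⁻¹ * f i + f (swapPair a b i)
    else if i a = false ∧ i b = true then f (swapPair a b i) - v * f i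
    else 0
  map_add' f g := by
    funext i
    simp only [Pi.add_apply]
    split_ifs <;> ring
  map_smul' c f := by
    funext i
    simp only [Pi.smul_apply, smul_eq_mul, RingHom.id_apply]
    split_ifs <;> ring

/-- The partial sum `α₁ + ⋯ + α_{q-1}` of the entries before position `q`. -/
def prefSum {n : ℕ} (α : Fin n → Bool) (q : Fin n) : ℤ :=
  ∑ t ∈ Finset.univ.filter (fun t => t < q), sgn (α t)

/-- `(i, j)` is a pair of `α`: `α_i = 1` and `j` is the least index `> i` with
`α_i + ⋯ + α_j = 0`. -/
def PairedAt {n : ℕ} (α : Fin n → Bool) (i j : Fin n) : Prop :=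
  α i = true ∧ i < j ∧ (∑ t ∈ Finset.Icc i j, sgn (α t)) = 0 ∧
    ∀ j' : Fin n, i < j' → j' < j → (∑ t ∈ Finset.Icc i j', sgn (α t)) ≠ 0

/-- An index is a defect if it belongs to no pair. -/
def IsDefect {n : ℕ} (α : Fin n → Bool) (i : Fin n) : Prop :=
  (∀ j, ¬ PairedAt α i j) ∧ (∀ j, ¬ PairedAt α j i)

/-- `γ ∈ S(α)`: `γ` is obtained from `α` by negating both entries of each pair
in some subset of the pairs of `α`. -/
def InS {n : ℕ} (α γ : Fin n → Bool) : Prop :=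
  (∀ i, IsDefect α i → γ i = α i) ∧
  (∀ i j, PairedAt α i j → (γ i = α i ∧ γ j = α j) ∨ (γ i = !α i ∧ γ j = !α j))

/-- `σ(α, γ)`: the number of pairs of `α` negated to obtain `γ`. -/
def sigmaCount {n : ℕ} (α γ : Fin n → Bool) : ℕ :=
  Nat.card {p : Fin n × Fin n // PairedAt α p.1 p.2 ∧ γ p.1 ≠ α p.1}

/-- The natural (cellular) vectors `N(α) = Σ_{γ ∈ S(α)} (−v)^{σ(α,γ)} y_γ`,
written in coordinates. -/
def Nvec (v : k) (n : ℕ) (α : Fin n → Bool) : Tn k n :=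
  fun γ => if InS α γ then (-v) ^ (sigmaCount α γ) else 0

/-- `β^{(j)}` (0-indexed `j`): change the entry of `β` at the position of its
`(j+1)`-st defect (0-indexed: defect number `j`) to `−1`. -/
def linkDefect {m : ℕ} (β : Fin m → Bool) (j : ℕ) : Fin m → Bool :=
  match (Finset.sort (Finset.univ.filter (fun i => IsDefect β i)) (· ≤ ·))[j]? with
  | some q => Function.update β q false
  | none => β

/-!
Everything except the normalisation in (c) reduces to two facts about `E` and `F` on
`V^{⊗n}`: `F` is adjoint to `v K⁻¹ E` for the form, and `(EF - FE) y_i = [wt i] y_i`.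
In the commutator the off-diagonal terms of `EF` and `FE` coincide, and the diagonal
coefficient `Σ_j ± v^(prefSum - suffSum)` telescopes along the partial sums of `i`, because
`m ↦ v^m [m]` changes by `±v^(2m ± 1)` when `m` moves by `±1`. For maximal `b` of weight `w`
this gives `⟨Fb, Fb'⟩ = v^(1-w) [w] ⟨b, b'⟩`; in (c) the weights agree unless `⟨b, b'⟩ = 0`,
and `[w] + v^(w+1) = v [w+1]` finishes.
-/

section QuantumIntegers

variable {v : k}

@[simp]
lemma qint_zero : qint v 0 = 0 := by simp [qint, qintN]

lemma mul_qintN_succ (hv : v ≠ 0) (a : ℕ) :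
    v * qintN v (a + 1) = qintN v a + v ^ ((a : ℤ) + 1) := by
  rw [qintN, qintN, Finset.sum_range_succ', mul_add, Finset.mul_sum, ← zpow_one_add₀ hv]
  congr 1
  · refine Finset.sum_congr rfl fun t _ => ?_
    rw [← zpow_one_add₀ hv]
    congr 1
    push_cast
    ring
  · congr 1
    push_cast
    ring

lemma qintN_succ (hv : v ≠ 0) (a : ℕ) :
    qintN v (a + 1) = v * qintN v a + v ^ (-(a : ℤ)) := by
  rw [qintN, qintN, Finset.sum_range_succ, Finset.mul_sum]
  congr 1
  · refine Finset.sum_congr rfl fun t _ => ?_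
    rw [← zpow_one_add₀ hv]
    congr 1
    push_cast
    ring
  · congr 1
    push_cast
    ring

lemma qint_natCast (a : ℕ) : qint v a = qintN v a := by
  simp [qint]

lemma qint_neg_natCast (a : ℕ) : qint v (-a) = -qintN v a := by
  rcases Nat.eq_zero_or_pos a with rfl | ha
  · simp [qint, qintN]
  · simp [qint, ha.ne']

lemma mul_qint_add_one (hv : v ≠ 0) (m : ℤ) :
    v * qint v (m + 1) = qint v m + v ^ (m + 1) := by
  cases m with
  | ofNat a =>
    rw [Int.ofNat_eq_natCast, ← Nat.cast_add_one, qint_natCast, qint_natCast, mul_qintN_succ hv,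
      Nat.cast_add_one]
  | negSucc a =>
    rw [Int.negSucc_eq, show -((a : ℤ) + 1) + 1 = -a by ring, qint_neg_natCast,
      ← Nat.cast_add_one, qint_neg_natCast, qintN_succ hv]
    ring

lemma zpow_mul_qint_add_sgn (hv : v ≠ 0) (m : ℤ) (c : Bool) :
    v ^ (m + sgn c) * qint v (m + sgn c) = v ^ m * qint v m + sgn c * v ^ (2 * m + sgn c) := by
  have step : ∀ m : ℤ, v ^ (m + 1) * qint v (m + 1) = v ^ m * qint v m + v ^ (2 * m + 1) := by
    intro m
    rw [zpow_add_one₀ hv, mul_assoc, mul_qint_add_one hv,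
      show 2 * m + 1 = m + (m + 1) by ring, zpow_add₀ hv m (m + 1)]
    ring
  cases c
  · have h := step (m + -1)
    simp only [sgn, Bool.false_eq_true, if_false, Int.cast_neg, Int.cast_one] at h ⊢
    rw [show m + -1 + 1 = m by ring] at h
    rw [show 2 * m + -1 = 2 * (m + -1) + 1 by ring]
    linear_combination -h
  · simpa [sgn] using step m

end QuantumIntegers

section PartialSums

variable {n : ℕ}

@[simp] lemma sgn_true : sgn true = 1 := rfl

@[simp] lemma sgn_false : sgn false = -1 := rfl

def suffSum (i : Fin n → Bool) (q : Fin n) : ℤ :=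
  ∑ t ∈ Finset.univ.filter (fun t => q < t), sgn (i t)

lemma sum_sgn_update (s : Finset (Fin n)) (i : Fin n → Bool) (j : Fin n) (c : Bool) :
    ∑ t ∈ s, sgn (Function.update i j c t)
      = ∑ t ∈ s, sgn (i t) + if j ∈ s then sgn c - sgn (i j) else 0 := by
  change ∑ t ∈ s, (sgn ∘ Function.update i j c) t = _
  rw [Function.comp_update]
  split_ifs with hj
  · rw [Finset.sum_update_of_mem hj, Finset.sum_eq_add_sum_sdiff_singleton j _ (absurd hj)]
    simp only [Function.comp_apply]
    ring
  · rw [Finset.sum_update_of_notMem hj, add_zero]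
    rfl

lemma prefSum_update (i : Fin n → Bool) (q j : Fin n) (c : Bool) :
    prefSum (Function.update i j c) q = prefSum i q + if j < q then sgn c - sgn (i j) else 0 := by
  simp only [prefSum, sum_sgn_update, Finset.mem_filter, Finset.mem_univ, true_and]

lemma suffSum_update (i : Fin n → Bool) (q j : Fin n) (c : Bool) :
    suffSum (Function.update i j c) q = suffSum i q + if q < j then sgn c - sgn (i j) else 0 := by
  simp only [suffSum, sum_sgn_update, Finset.mem_filter, Finset.mem_univ, true_and]

@[simp]
lemma prefSum_update_self (i : Fin n → Bool) (j : Fin n) (c : Bool) :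
    prefSum (Function.update i j c) j = prefSum i j := by
  simp [prefSum_update]

@[simp]
lemma suffSum_update_self (i : Fin n → Bool) (j : Fin n) (c : Bool) :
    suffSum (Function.update i j c) j = suffSum i j := by
  simp [suffSum_update]

lemma wt_eq_prefSum_add_sgn_add_suffSum (i : Fin n → Bool) (j : Fin n) :
    wt i = prefSum i j + sgn (i j) + suffSum i j := by
  have hsplit : (Finset.univ : Finset (Fin n))
      = Finset.univ.filter (· < j) ∪ ({j} ∪ Finset.univ.filter (j < ·)) := by
    ext t
    simp [em]
  rw [wt, hsplit, Finset.sum_union, Finset.sum_union, Finset.sum_singleton, add_assoc]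
  · rfl
  · simp
  · rw [Finset.disjoint_union_right]
    simp +contextual [Finset.disjoint_left, le_of_lt, ne_of_lt]

lemma prefSum_castSucc (i : Fin (n + 1) → Bool) (j : Fin n) :
    prefSum i j.castSucc = prefSum (Fin.init i) j := by
  rw [prefSum, prefSum, Finset.sum_filter, Finset.sum_filter, Fin.sum_univ_castSucc,
    if_neg (lt_asymm (Fin.castSucc_lt_last j)), add_zero]
  simp only [Fin.castSucc_lt_castSucc_iff, Fin.init]

lemma prefSum_last (i : Fin (n + 1) → Bool) : prefSum i (Fin.last n) = wt (Fin.init i) := by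
  rw [prefSum, wt, Finset.sum_filter, Fin.sum_univ_castSucc, if_neg (lt_irrefl _), add_zero]
  simp only [Fin.castSucc_lt_last, if_true, Fin.init]

lemma wt_eq_wt_init_add (i : Fin (n + 1) → Bool) :
    wt i = wt (Fin.init i) + sgn (i (Fin.last n)) := by
  rw [wt, wt, Fin.sum_univ_castSucc]
  rfl

lemma sum_sub_prefSum_telescope {M : Type*} [AddCommGroup M] (g : ℤ → M) :
    ∀ {n : ℕ} (i : Fin n → Bool),
      ∑ j, (g (prefSum i j + sgn (i j)) - g (prefSum i j)) = g (wt i) - g 0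
  | 0, i => by simp [wt]
  | n + 1, i => by
    rw [Fin.sum_univ_castSucc]
    simp only [prefSum_castSucc]
    change ∑ j, (g (prefSum (Fin.init i) j + sgn (Fin.init i j)) - _) + _ = _
    rw [sum_sub_prefSum_telescope g (Fin.init i), prefSum_last, wt_eq_wt_init_add i]
    abel

end PartialSums

section RaisingLowering

variable {v : k} {n : ℕ}

lemma Eop_apply (f : Tn k n) (i : Fin n → Bool) :
    Eop v n f i = ∑ j ∈ Finset.univ.filter (fun j => i j = true),
      v ^ prefSum i j * f (Function.update i j false) := rfl

lemma Fop_apply (f : Tn k n) (i : Fin n → Bool) :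
    Fop v n f i = ∑ j ∈ Finset.univ.filter (fun j => i j = false),
      v ^ (-suffSum i j) * f (Function.update i j true) := rfl

lemma sum_ite_eq_false_update {M : Type*} [AddCommMonoid M] (j : Fin n)
    (φ : (Fin n → Bool) → (Fin n → Bool) → M) :
    ∑ i, (if i j = false then φ i (Function.update i j true) else 0)
      = ∑ i, (if i j = true then φ (Function.update i j false) i else 0) := by
  have hflip : Function.Involutive fun i : Fin n → Bool => Function.update i j (!i j) := fun i => by
    simp only [Function.update_self, Bool.not_not, Function.update_idem, Function.update_eq_self]
  refine Fintype.sum_bijective _ hflip.bijective _ _ fun i => ?_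
  cases h : i j
  · have hi : Function.update i j false = i := h ▸ Function.update_eq_self j i
    simp [hi]
  · simp

lemma form_Fop (hv : v ≠ 0) (f g : Tn k n) :
    form f (Fop v n g) = ∑ i, v ^ (1 - wt i) * Eop v n f i * g i := by
  unfold form
  calc ∑ i, f i * Fop v n g i
      = ∑ j, ∑ i, if i j = false
          then f i * (v ^ (-suffSum i j) * g (Function.update i j true)) else 0 := by
        simp_rw [Fop_apply, Finset.mul_sum, Finset.sum_filter]
        exact Finset.sum_comm
    _ = ∑ j, ∑ i, if i j = true
          then f (Function.update i j false) * (v ^ (-suffSum i j) * g i) else 0 := by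
        refine Finset.sum_congr rfl fun j _ => ?_
        convert sum_ite_eq_false_update j fun i i' => f i * (v ^ (-suffSum i' j) * g i')
          using 4 with i
        simp
    _ = ∑ i, v ^ (1 - wt i) * Eop v n f i * g i := by
        rw [Finset.sum_comm]
        refine Finset.sum_congr rfl fun i _ => ?_
        rw [Eop_apply, Finset.sum_filter, Finset.mul_sum, Finset.sum_mul]
        refine Finset.sum_congr rfl fun j _ => ?_
        split_ifs with hj
        · have hw := wt_eq_prefSum_add_sgn_add_suffSum i j
          rw [hj, sgn_true] at hw
          rw [show -suffSum i j = (1 - wt i) + prefSum i j by omega, zpow_add₀ hv]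
          ring
        · simp

lemma sum_sgn_mul_zpow_eq_qint (hv : v ≠ 0) (i : Fin n → Bool) :
    ∑ j, (sgn (i j) : k) * v ^ (prefSum i j - suffSum i j) = qint v (wt i) := by
  let g : ℤ → k := fun m => v ^ m * qint v m
  have hterm : ∀ j, (sgn (i j) : k) * v ^ (prefSum i j - suffSum i j)
      = v ^ (-wt i) * (g (prefSum i j + sgn (i j)) - g (prefSum i j)) := by
    intro j
    have hw := wt_eq_prefSum_add_sgn_add_suffSum i j
    simp only [g, zpow_mul_qint_add_sgn hv]
    rw [show prefSum i j - suffSum i j = -wt i + (2 * prefSum i j + sgn (i j)) by omega,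
      zpow_add₀ hv]
    ring
  rw [Finset.sum_congr rfl fun j _ => hterm j, ← Finset.mul_sum, sum_sub_prefSum_telescope g]
  simp [g, zpow_neg, inv_mul_cancel_left₀ (zpow_ne_zero _ hv)]

end RaisingLowering

section Commutator

variable {v : k} {n : ℕ}

lemma filter_update_eq_insert (i : Fin n → Bool) (j : Fin n) (c : Bool) :
    Finset.univ.filter (fun t => Function.update i j c t = c)
      = insert j (Finset.univ.filter (fun t => i t = c)) := by
  ext t
  rcases eq_or_ne t j with rfl | ht <;> simp [Function.update_of_ne, *]

lemma update_update_of_apply_eq {i : Fin n → Bool} {j : Fin n} {c : Bool} (h : i j = c)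
    (c' : Bool) : Function.update (Function.update i j c') j c = i := by
  rw [Function.update_idem, ← h, Function.update_eq_self]

def crossSum (v : k) (f : Tn k n) (i : Fin n → Bool) : k :=
  ∑ j ∈ Finset.univ.filter (fun j => i j = true),
    ∑ j' ∈ Finset.univ.filter (fun j' => i j' = false),
      v ^ (prefSum i j - suffSum i j' + if j' < j then 2 else 0)
        * f (Function.update (Function.update i j false) j' true)

lemma Eop_Fop_apply (hv : v ≠ 0) (f : Tn k n) (i : Fin n → Bool) :
    Eop v n (Fop v n f) i
      = (∑ j ∈ Finset.univ.filter (fun j => i j = true), v ^ (prefSum i j - suffSum i j)) * f i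
        + crossSum v f i := by
  rw [Eop_apply, crossSum, Finset.sum_mul, ← Finset.sum_add_distrib]
  refine Finset.sum_congr rfl fun j hj => ?_
  have hij : i j = true := (Finset.mem_filter.mp hj).2
  rw [Fop_apply, filter_update_eq_insert, Finset.sum_insert (by simp [hij]), mul_add,
    update_update_of_apply_eq hij, suffSum_update_self, ← mul_assoc, ← zpow_add₀ hv,
    ← sub_eq_add_neg, Finset.mul_sum]
  congr 1
  refine Finset.sum_congr rfl fun j' hj' => ?_
  have hij' : i j' = false := (Finset.mem_filter.mp hj').2
  rw [suffSum_update, hij, sgn_true, sgn_false, ← mul_assoc, ← zpow_add₀ hv]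
  congr 2
  split_ifs <;> ring

lemma Fop_Eop_apply (hv : v ≠ 0) (f : Tn k n) (i : Fin n → Bool) :
    Fop v n (Eop v n f) i
      = (∑ j ∈ Finset.univ.filter (fun j => i j = false), v ^ (prefSum i j - suffSum i j)) * f i
        + crossSum v f i := by
  rw [Fop_apply, crossSum, Finset.sum_comm, Finset.sum_mul, ← Finset.sum_add_distrib]
  refine Finset.sum_congr rfl fun j' hj' => ?_
  have hij' : i j' = false := (Finset.mem_filter.mp hj').2
  rw [Eop_apply, filter_update_eq_insert, Finset.sum_insert (by simp [hij']), mul_add,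
    update_update_of_apply_eq hij', prefSum_update_self, ← mul_assoc, ← zpow_add₀ hv,
    neg_add_eq_sub, Finset.mul_sum]
  congr 1
  refine Finset.sum_congr rfl fun j hj => ?_
  have hij : i j = true := (Finset.mem_filter.mp hj).2
  have hne : j' ≠ j := fun h => by simp [h, hij] at hij'
  rw [Function.update_comm hne, prefSum_update, hij', sgn_true, sgn_false, ← mul_assoc,
    ← zpow_add₀ hv]
  congr 2
  split_ifs <;> ring

lemma Eop_Fop_sub_Fop_Eop_apply (hv : v ≠ 0) (f : Tn k n) (i : Fin n → Bool) :
    Eop v n (Fop v n f) i - Fop v n (Eop v n f) i = qint v (wt i) * f i := by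
  rw [Eop_Fop_apply hv, Fop_Eop_apply hv, ← sum_sgn_mul_zpow_eq_qint hv,
    add_sub_add_right_eq_sub, ← sub_mul, Finset.sum_filter, Finset.sum_filter,
    ← Finset.sum_sub_distrib]
  congr 1
  refine Finset.sum_congr rfl fun j _ => ?_
  cases i j <;> simp

end Commutator

section Form

variable {v : k} {n : ℕ}

lemma form_sub_left (f f' g : Tn k n) : form (f - f') g = form f g - form f' g :=
  sub_dotProduct f f' g

lemma form_sub_right (f g g' : Tn k n) : form f (g - g') = form f g - form f g' :=
  dotProduct_sub f g g'

lemma form_smul_left (c : k) (f g : Tn k n) : form (c • f) g = c * form f g :=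
  smul_dotProduct c f g

lemma form_smul_right (c : k) (f g : Tn k n) : form f (c • g) = c * form f g :=
  dotProduct_smul c f g

lemma form_tensY (c c' : Bool) (f g : Tn k n) :
    form (tensY c f) (tensY c' g) = if c = c' then form f g else 0 := by
  rw [form, ← (Fin.snocEquiv fun _ => Bool).sum_comp, Fintype.sum_prod_type, Fintype.sum_bool]
  cases c <;> cases c' <;> simp [tensY, form]

lemma wt_eq_of_form_ne_zero {f g : Tn k n} {w w' : ℤ} (hfg : form f g ≠ 0)
    (hf : ∀ i, f i ≠ 0 → wt i = w) (hg : ∀ i, g i ≠ 0 → wt i = w') : w = w' := by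
  obtain ⟨i, -, hi⟩ := Finset.exists_ne_zero_of_sum_ne_zero hfg
  rw [← hf i (left_ne_zero_of_mul hi), hg i (right_ne_zero_of_mul hi)]

lemma form_Fop_Fop_of_Eop_eq_zero (hv : v ≠ 0) {f : Tn k n} {w : ℤ} (hE : Eop v n f = 0)
    (hf : ∀ i, f i ≠ 0 → wt i = w) (g : Tn k n) :
    form (Fop v n f) (Fop v n g) = v ^ (1 - w) * qint v w * form f g := by
  rw [form_Fop hv, form, Finset.mul_sum]
  refine Finset.sum_congr rfl fun i _ => ?_
  have hEF : Eop v n (Fop v n f) i = qint v (wt i) * f i := by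
    simpa [hE] using Eop_Fop_sub_Fop_Eop_apply hv f i
  rw [hEF]
  by_cases hfi : f i = 0
  · simp [hfi]
  · rw [hf i hfi]
    ring

lemma form_Phi1_Phi1 (f g : Tn k n) : form (Phi1 f) (Phi1 g) = form f g := by
  simp [Phi1, form_tensY]

lemma form_Phi1_Phi2_of_Eop_eq_zero (hv : v ≠ 0) {f : Tn k n} (hE : Eop v n f = 0) (w : ℤ)
    (g : Tn k n) : form (Phi1 f) (Phi2 v w g) = 0 := by
  simp [Phi1, Phi2, form_sub_right, form_smul_right, form_tensY, form_Fop hv, hE]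

lemma form_Phi2_Phi2_of_Eop_eq_zero (hv : v ≠ 0) {f g : Tn k n} {w w' : ℤ}
    (hE : Eop v n f = 0) (hf : ∀ i, f i ≠ 0 → wt i = w) (hg : ∀ i, g i ≠ 0 → wt i = w') :
    form (Phi2 v w f) (Phi2 v w' g) = v * qint v w * qint v (w + 1) * form f g := by
  have hexpand : form (Phi2 v w f) (Phi2 v w' g)
      = qint v w * qint v w' * form f g + v ^ (w' + 1) * qint v w * form f g := by
    simp only [Phi2, form_sub_left, form_sub_right, form_smul_left, form_smul_right, form_tensY,
      form_Fop_Fop_of_Eop_eq_zero hv hE hf, if_true, if_false, Bool.false_eq_true,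
      Bool.true_eq_false]
    rw [show w' + 1 = w + w' + (1 - w) by ring, zpow_add₀ hv, zpow_add₀ hv]
    ring
  by_cases hfg : form f g = 0
  · simp [hexpand, hfg]
  · obtain rfl := wt_eq_of_form_ne_zero hfg hf hg
    rw [hexpand]
    linear_combination (-(qint v w * form f g)) * mul_qint_add_one hv w

end Form

theorem stmt_11_general {k : Type*} [Field k] (v : k) (hv : v ≠ 0) (n : ℕ)
    (b b' : Tn k n) (w w' : ℤ)
    (hbw : ∀ i, b i ≠ 0 → wt i = w)
    (hb'w : ∀ i, b' i ≠ 0 → wt i = w') :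
    form (Phi1 b) (Phi1 b') = form b b' ∧
    (Eop v n b = 0 → form (Phi1 b) (Phi2 v w' b') = 0) ∧
    (Eop v n b = 0 → 0 < w → 0 < w' →
      form (Phi2 v w b) (Phi2 v w' b') = v * qint v w * qint v (w + 1) * form b b') :=
  ⟨form_Phi1_Phi1 b b', fun hE => form_Phi1_Phi2_of_Eop_eq_zero hv hE w' b',
    fun hE _ _ => form_Phi2_Phi2_of_Eop_eq_zero hv hE hbw hb'w⟩

/-- orthogonality relations between `Φ₁` and `Φ₂`. -/
theorem stmt_11 {k : Type*} [Field k] (v : k) (hv : v ≠ 0) (n : ℕ)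
    (b b' : Tn k n) (w w' : ℤ)
    (hb0 : b ≠ 0) (hbw : ∀ i, b i ≠ 0 → wt i = w)
    (hb'0 : b' ≠ 0) (hb'w : ∀ i, b' i ≠ 0 → wt i = w') :
    form (Phi1 b) (Phi1 b') = form b b' ∧
    (Eop v n b = 0 → form (Phi1 b) (Phi2 v w' b') = 0) ∧
    (Eop v n b = 0 → 0 < w → 0 < w' →
      form (Phi2 v w b) (Phi2 v w' b') = v * qint v w * qint v (w + 1) * form b b') :=
  stmt_11_general v hv n b b' w w' hbw hb'w
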